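/- arXiv:0710.1360 — 3 statements merged into one kernel-verified Lean document; each statement's English description precedes it below -/
import Mathlib

section
/- Let U be an open subset of ℝⁿ and suppose k ≥ 1 is such that for each connected component V of U and all x, y ∈ ∂V, there is a rectifiable path in ∂V from x to y of length at most k·|x − y|. If γ : [0,1] → closure(U) is a rectifiable path of length L whose endpoints lie in E = ∂U, then there exists a rectifiable path in E with the same endpoints and length at most k·L. -/
/-!
The parameters at which `γ` leaves `U` form a closed set `D ∋ 0, 1`. On each gap `(p, q)` of `D`
the path runs through a single component `V` of `U` and has its endpoints on `∂V ⊆ ∂U`, so it can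
be replaced by a path in `∂V` of length at most `k |γ p - γ q|`, hence at most `k` times the length
of `γ` on `[p, q]`. The glued path is continuous because near a point of `D` every gap other than
the two adjacent ones is short, and its length bound passes to the limit by lower semicontinuity
of the variation, after filling only the finitely many gaps longer than `1 / (N + 1)`.
-/

open Set Filter Topology
open scoped ENNReal NNReal

/-- `(p, q)` is a bounded component of the complement of `D`. -/
structure IsGap (D : Set ℝ) (p q : ℝ) : Prop where
  left_mem : p ∈ D
  right_mem : q ∈ D
  lt : p < q
  Ioo_subset : Ioo p q ⊆ Dᶜ

namespace IsGap

variable {D : Set ℝ} {p q p' q' s t : ℝ}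

theorem le_left (h : IsGap D p q) (hs : s ∈ D) (hsq : s < q) : s ≤ p :=
  not_lt.1 fun hps => h.Ioo_subset ⟨hps, hsq⟩ hs

theorem right_le (h : IsGap D p q) (ht : t ∈ D) (hpt : p < t) : q ≤ t :=
  not_lt.1 fun htq => h.Ioo_subset ⟨hpt, htq⟩ ht

theorem eq_of_mem_Ioo (h : IsGap D p q) (h' : IsGap D p' q') (ht : t ∈ Ioo p q)
    (ht' : t ∈ Ioo p' q') : p = p' ∧ q = q' :=
  ⟨le_antisymm (h'.le_left h.left_mem (ht.1.trans ht'.2))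
      (h.le_left h'.left_mem (ht'.1.trans ht.2)),
    le_antisymm (h.right_le h'.right_mem (ht.1.trans ht'.2))
      (h'.right_le h.right_mem (ht'.1.trans ht.2))⟩

theorem of_preimage_neg (h : IsGap (Neg.neg ⁻¹' D) p q) : IsGap D (-q) (-p) where
  left_mem := h.right_mem
  right_mem := h.left_mem
  lt := neg_lt_neg h.lt
  Ioo_subset u hu := by
    simpa using h.Ioo_subset (show -u ∈ Ioo p q from ⟨by linarith [hu.2], by linarith [hu.1]⟩)

end IsGap

theorem exists_isGap {D : Set ℝ} {a b t : ℝ} (hD : IsClosed D) (ha : a ∈ D) (hb : b ∈ D)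
    (ht : t ∈ Icc a b) (htD : t ∉ D) : ∃ p q, IsGap D p q ∧ t ∈ Ioo p q := by
  have hbddA : BddAbove (D ∩ Iic t) := bddAbove_Iic.mono inter_subset_right
  have hbddB : BddBelow (D ∩ Ici t) := bddBelow_Ici.mono inter_subset_right
  have hp := (hD.inter isClosed_Iic).csSup_mem ⟨a, ha, ht.1⟩ hbddA
  have hq := (hD.inter isClosed_Ici).csInf_mem ⟨b, hb, ht.2⟩ hbddB
  have hpt : sSup (D ∩ Iic t) < t := hp.2.lt_of_ne fun h => htD (h ▸ hp.1)
  have htq : t < sInf (D ∩ Ici t) := hq.2.lt_of_ne' fun h => htD (h ▸ hq.1)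
  refine ⟨_, _, ⟨hp.1, hq.1, hpt.trans htq, fun d hd hdD => ?_⟩, hpt, htq⟩
  rcases le_total d t with hdt | htd
  · exact (le_csSup hbddA ⟨hdD, hdt⟩).not_gt hd.1
  · exact (csInf_le hbddB ⟨hdD, htd⟩).not_gt hd.2

section GapFill

variable {E : Type*} {D : Set ℝ} {γ : ℝ → E} {τ : ℝ → ℝ → ℝ → E} {p q t : ℝ}

open Classical in
/-- The path that follows `γ` on `D` and `τ p q` on each gap `(p, q)` of `D`. -/
noncomputable def gapFill (D : Set ℝ) (γ : ℝ → E) (τ : ℝ → ℝ → ℝ → E) (t : ℝ) : E :=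
  if h : ∃ I : ℝ × ℝ, IsGap D I.1 I.2 ∧ t ∈ Ioo I.1 I.2 then τ h.choose.1 h.choose.2 t else γ t

theorem gapFill_of_isGap (h : IsGap D p q) (ht : t ∈ Ioo p q) : gapFill D γ τ t = τ p q t := by
  have hex : ∃ I : ℝ × ℝ, IsGap D I.1 I.2 ∧ t ∈ Ioo I.1 I.2 := ⟨(p, q), h, ht⟩
  obtain ⟨hp, hq⟩ := hex.choose_spec.1.eq_of_mem_Ioo h hex.choose_spec.2 ht
  rw [gapFill, dif_pos hex, hp, hq]

theorem gapFill_eq_self (h : ∀ p q, IsGap D p q → t ∈ Ioo p q → τ p q t = γ t) :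
    gapFill D γ τ t = γ t := by
  rw [gapFill]
  split_ifs with hex
  exacts [h _ _ hex.choose_spec.1 hex.choose_spec.2, rfl]

theorem gapFill_of_mem (ht : t ∈ D) : gapFill D γ τ t = γ t :=
  gapFill_eq_self fun _ _ h htI => absurd ht (h.Ioo_subset htI)

theorem IsGap.eqOn_gapFill (h : IsGap D p q) (hp : τ p q p = γ p) (hq : τ p q q = γ q) :
    EqOn (gapFill D γ τ) (τ p q) (Icc p q) := by
  intro t ht
  rcases eq_endpoints_or_mem_Ioo_of_mem_Icc ht with rfl | rfl | ht
  · rw [gapFill_of_mem h.left_mem, hp]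
  · rw [gapFill_of_mem h.right_mem, hq]
  · exact gapFill_of_isGap h ht

theorem mapsTo_gapFill {S : Set E} {a b : ℝ} (hD : IsClosed D) (ha : a ∈ D) (hb : b ∈ D)
    (hγ : MapsTo γ D S) (hτ : ∀ p q, IsGap D p q → MapsTo (τ p q) (Ioo p q) S) :
    MapsTo (gapFill D γ τ) (Icc a b) S := by
  intro t ht
  by_cases htD : t ∈ D
  · rw [gapFill_of_mem htD]
    exact hγ htD
  obtain ⟨p, q, hpq, htpq⟩ := exists_isGap hD ha hb ht htD
  rw [gapFill_of_isGap hpq htpq]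
  exact hτ p q hpq htpq

end GapFill

theorem eVariationOn_Icc_add_Icc {E : Type*} [PseudoEMetricSpace E] (f : ℝ → E) {a b c : ℝ}
    (hab : a ≤ b) (hbc : b ≤ c) :
    eVariationOn f (Icc a b) + eVariationOn f (Icc b c) = eVariationOn f (Icc a c) := by
  simpa using eVariationOn.Icc_add_Icc f hab hbc (mem_univ b)

section Variation

variable {E : Type*} [PseudoEMetricSpace E] {D : Set ℝ} {γ : ℝ → E} {τ : ℝ → ℝ → ℝ → E}
  {K : ℝ≥0∞} {s t : ℝ}

/-- Induction on `⌈(t - s) / δ⌉`: a filled gap inside `[s, t]` is longer than `δ`, so splitting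
it off leaves two pieces that are shorter by more than `δ`. -/
theorem eVariationOn_gapFill_le_of_short_eq {δ : ℝ} (hK : 1 ≤ K)
    (hlong : ∀ p q, IsGap D p q → δ < q - p → τ p q p = γ p ∧ τ p q q = γ q ∧
      eVariationOn (τ p q) (Icc p q) ≤ K * edist (γ p) (γ q))
    (hshort : ∀ p q, IsGap D p q → q - p ≤ δ → τ p q = γ) (m : ℕ) :
    ∀ {s t}, s ∈ D → t ∈ D → s ≤ t → t - s ≤ m * δ →
      eVariationOn (gapFill D γ τ) (Icc s t) ≤ K * eVariationOn γ (Icc s t) := by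
  induction m with
  | zero =>
    intro s t _ _ hst hm
    obtain rfl : s = t := le_antisymm hst (by simpa using hm)
    simp
  | succ m ih =>
    intro s t hs ht hst hm
    by_cases hgap : ∃ p q, IsGap D p q ∧ s ≤ p ∧ q ≤ t ∧ δ < q - p
    · obtain ⟨p, q, hpq, hsp, hqt, hlen⟩ := hgap
      obtain ⟨hp, hq, hvar⟩ := hlong p q hpq hlen
      have hmid : eVariationOn (gapFill D γ τ) (Icc p q) ≤ K * eVariationOn γ (Icc p q) :=
        calc eVariationOn (gapFill D γ τ) (Icc p q) = eVariationOn (τ p q) (Icc p q) :=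
              eVariationOn.eq_of_eqOn (hpq.eqOn_gapFill hp hq)
          _ ≤ K * edist (γ p) (γ q) := hvar
          _ ≤ K * eVariationOn γ (Icc p q) := by
              rw [edist_comm]
              gcongr
              exact eVariationOn.edist_le γ (right_mem_Icc.2 hpq.lt.le) (left_mem_Icc.2 hpq.lt.le)
      push_cast at hm
      rw [← eVariationOn_Icc_add_Icc _ hsp (hpq.lt.le.trans hqt),
        ← eVariationOn_Icc_add_Icc _ hpq.lt.le hqt,
        ← eVariationOn_Icc_add_Icc γ hsp (hpq.lt.le.trans hqt),
        ← eVariationOn_Icc_add_Icc γ hpq.lt.le hqt, mul_add, mul_add]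
      gcongr
      · exact ih hs hpq.left_mem hsp (by linarith)
      · exact ih hpq.right_mem ht hqt (by linarith)
    · have heq : EqOn (gapFill D γ τ) γ (Icc s t) := by
        refine fun w hw => gapFill_eq_self fun p q hpq hwpq => ?_
        have hsp := hpq.le_left hs (hw.1.trans_lt hwpq.2)
        have hqt := hpq.right_le ht (hwpq.1.trans_le hw.2)
        rw [hshort p q hpq (not_lt.1 fun hlen => hgap ⟨p, q, hpq, hsp, hqt, hlen⟩)]
      rw [eVariationOn.eq_of_eqOn heq]
      exact le_mul_of_one_le_left zero_le hK

theorem eVariationOn_gapFill_le (hK : 1 ≤ K)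
    (hτ : ∀ p q, IsGap D p q → τ p q p = γ p ∧ τ p q q = γ q ∧
      eVariationOn (τ p q) (Icc p q) ≤ K * edist (γ p) (γ q))
    (hs : s ∈ D) (ht : t ∈ D) (hst : s ≤ t) :
    eVariationOn (gapFill D γ τ) (Icc s t) ≤ K * eVariationOn γ (Icc s t) := by
  set τN : ℕ → ℝ → ℝ → ℝ → E := fun N p q => if 1 / ((N : ℝ) + 1) < q - p then τ p q else γ
  have hN (N : ℕ) :
      eVariationOn (gapFill D γ (τN N)) (Icc s t) ≤ K * eVariationOn γ (Icc s t) := by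
    have hδ : (0 : ℝ) < 1 / ((N : ℝ) + 1) := by positivity
    obtain ⟨m, hm⟩ := exists_nat_ge ((t - s) / (1 / ((N : ℝ) + 1)))
    refine eVariationOn_gapFill_le_of_short_eq hK (fun p q hpq hlong => ?_)
      (fun p q _ hshort => if_neg (not_lt.2 hshort)) m hs ht hst ((div_le_iff₀ hδ).1 hm)
    simpa only [τN, if_pos hlong] using hτ p q hpq
  have hlim : ∀ x ∈ Icc s t,
      Tendsto (fun N => gapFill D γ (τN N) x) atTop (𝓝 (gapFill D γ τ x)) := by
    intro x _
    by_cases hx : ∃ p q, IsGap D p q ∧ x ∈ Ioo p q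
    · obtain ⟨p, q, hpq, hx⟩ := hx
      have hev : ∀ᶠ N : ℕ in atTop, 1 / ((N : ℝ) + 1) < q - p :=
        tendsto_one_div_add_atTop_nhds_zero_nat.eventually (gt_mem_nhds (sub_pos.2 hpq.lt))
      refine tendsto_const_nhds.congr' ?_
      filter_upwards [hev] with N hN
      rw [gapFill_of_isGap hpq hx, gapFill_of_isGap hpq hx]
      simp only [τN, if_pos hN]
    · push Not at hx
      simp only [gapFill_eq_self fun p q hpq hxpq => absurd hxpq (hx p q hpq)]
      exact tendsto_const_nhds
  by_contra! hlt
  obtain ⟨N, hN'⟩ := (eVariationOn.lowerSemicontinuous_aux hlim hlt).exists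
  exact (hN N).not_gt hN'

end Variation

section Continuity

variable {E : Type*} [PseudoMetricSpace E] {f : ℝ → E} {D : Set ℝ} {K : ℝ≥0} {a b t₀ : ℝ}

theorem dist_le_of_eVariationOn_le {s : Set ℝ} {x y u v : ℝ}
    (h : eVariationOn f s ≤ K * edist (f x) (f y)) (hu : u ∈ s) (hv : v ∈ s) :
    dist (f u) (f v) ≤ K * dist (f x) (f y) := by
  have := (eVariationOn.edist_le f hu hv).trans h
  rw [edist_nndist, edist_nndist, ← ENNReal.coe_mul, ENNReal.coe_le_coe] at this
  exact_mod_cast this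

theorem exists_mem_Ioo_of_forall_not_isGap (hD : IsClosed D) (hb : b ∈ D) (ht₀ : t₀ ∈ D)
    (hlt : t₀ < b) (hgap : ∀ q, ¬ IsGap D t₀ q) {δ : ℝ} (hδ : 0 < δ) :
    ∃ d ∈ D, d ∈ Ioo t₀ (t₀ + δ) := by
  set t₁ := min (t₀ + δ / 2) b
  have ht₁ : t₁ ∈ Ioo t₀ (t₀ + δ) :=
    ⟨lt_min (by linarith) hlt, (min_le_left _ _).trans_lt (by linarith)⟩
  by_cases ht₁D : t₁ ∈ D
  · exact ⟨t₁, ht₁D, ht₁⟩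
  obtain ⟨p, q, hpq, hp⟩ := exists_isGap hD ht₀ hb ⟨ht₁.1.le, min_le_right _ _⟩ ht₁D
  have ht₀p : t₀ ≤ p := hpq.le_left ht₀ (ht₁.1.trans hp.2)
  have hne : t₀ ≠ p := fun h => hgap q (h ▸ hpq)
  exact ⟨p, hpq.left_mem, ht₀p.lt_of_ne hne, hp.1.trans ht₁.2⟩

variable (hD : IsClosed D) (hfD : ContinuousOn f D)
  (hgap : ∀ p q, IsGap D p q →
    ContinuousOn f (Icc p q) ∧ eVariationOn f (Icc p q) ≤ K * edist (f p) (f q))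
include hD hfD hgap

/-- Near a point of `D` that is not the left end of a gap, gaps are short, and by the variation
bound `f` stays on them close to its values at their endpoints. -/
theorem continuousWithinAt_Icc_of_forall_isGap (hb : b ∈ D) (ht₀ : t₀ ∈ D) :
    ContinuousWithinAt f (Icc t₀ b) t₀ := by
  rcases le_or_gt b t₀ with hbt₀ | hlt
  · exact continuousWithinAt_singleton.mono fun t ht => le_antisymm (ht.2.trans hbt₀) ht.1
  by_cases hq : ∃ q, IsGap D t₀ q
  · obtain ⟨q, hq⟩ := hq
    exact ((hgap t₀ q hq).1 t₀ (left_mem_Icc.2 hq.lt.le)).mono_of_mem_nhdsWithin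
      (nhdsWithin_mono _ Icc_subset_Ici_self (Icc_mem_nhdsGE hq.lt))
  push Not at hq
  rw [Metric.continuousWithinAt_iff]
  intro ε hε
  set η := ε / (2 * K + 1)
  have hη : 0 < η := by positivity
  obtain ⟨δ, hδ, hδD⟩ := Metric.continuousWithinAt_iff.1 (hfD t₀ ht₀) η hη
  obtain ⟨d, hdD, hd⟩ := exists_mem_Ioo_of_forall_not_isGap hD hb ht₀ hlt hq hδ
  have hclose : ∀ s ∈ D, s ∈ Icc t₀ d → dist (f s) (f t₀) < η := fun s hs hs' =>
    hδD hs (by rw [Real.dist_eq, abs_lt]; constructor <;> linarith [hs'.1, hs'.2, hd.2])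
  refine ⟨d - t₀, by linarith [hd.1], fun t ht htd => ?_⟩
  have htd : t < d := by rw [Real.dist_eq, abs_lt] at htd; linarith [htd.2]
  by_cases htD : t ∈ D
  · exact (hclose t htD ⟨ht.1, htd.le⟩).trans_le (div_le_self hε.le (by simp))
  obtain ⟨p, q, hpq, htpq⟩ := exists_isGap hD ht₀ hb ht htD
  have hp := hclose p hpq.left_mem ⟨hpq.le_left ht₀ (ht.1.trans_lt htpq.2), htpq.1.le.trans htd.le⟩
  have hq := hclose q hpq.right_mem
    ⟨ht.1.trans htpq.2.le, hpq.right_le hdD (htpq.1.trans htd)⟩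
  have hfp := dist_le_of_eVariationOn_le (hgap p q hpq).2 (Ioo_subset_Icc_self htpq)
    (left_mem_Icc.2 hpq.lt.le)
  calc dist (f t) (f t₀) ≤ dist (f t) (f p) + dist (f p) (f t₀) := dist_triangle _ _ _
    _ ≤ K * (dist (f p) (f t₀) + dist (f q) (f t₀)) + dist (f p) (f t₀) := by
        gcongr
        exact hfp.trans (mul_le_mul_of_nonneg_left (dist_triangle_right _ _ _) K.2)
    _ < K * (η + η) + η := add_lt_add_of_le_of_lt (by gcongr) hp
    _ = ε := by simp only [η]; field_simp; ring

theorem continuousOn_of_forall_isGap (ha : a ∈ D) (hb : b ∈ D) : ContinuousOn f (Icc a b) := by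
  intro t ht
  by_cases htD : t ∈ D
  · have hright := continuousWithinAt_Icc_of_forall_isGap hD hfD hgap hb htD
    have hleft : ContinuousWithinAt f (Icc a t) t := by
      have hneg := continuousWithinAt_Icc_of_forall_isGap (f := f ∘ Neg.neg) (K := K)
        (hD.preimage continuous_neg) (hfD.comp continuous_neg.continuousOn (mapsTo_preimage _ _))
        (fun p q hpq => ?_) (b := -a) (t₀ := -t) (by simpa) (by simpa)
      · simpa [Function.comp_def] using hneg.comp continuous_neg.continuousWithinAt
          fun s hs => ⟨neg_le_neg hs.2, neg_le_neg hs.1⟩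
      obtain ⟨hcont, hvar⟩ := hgap _ _ hpq.of_preimage_neg
      refine ⟨hcont.comp continuous_neg.continuousOn fun s hs => ⟨neg_le_neg hs.2, neg_le_neg hs.1⟩,
        ?_⟩
      calc eVariationOn (f ∘ Neg.neg) (Icc p q) ≤ eVariationOn f (Icc (-q) (-p)) :=
            eVariationOn.comp_le_of_antitoneOn f _ (fun _ _ _ _ h => neg_le_neg h)
              fun s hs => ⟨neg_le_neg hs.2, neg_le_neg hs.1⟩
        _ ≤ K * edist ((f ∘ Neg.neg) p) ((f ∘ Neg.neg) q) := by
            simpa only [Function.comp_apply, edist_comm] using hvar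
    rw [← Icc_union_Icc_eq_Icc ht.1 ht.2]
    exact hleft.union hright
  obtain ⟨p, q, hpq, htpq⟩ := exists_isGap hD ha hb ht htD
  exact ((hgap p q hpq).1.continuousAt (Icc_mem_nhds htpq.1 htpq.2)).continuousWithinAt

end Continuity

theorem continuousOn_gapFill {E : Type*} [PseudoMetricSpace E] {D : Set ℝ} {γ : ℝ → E}
    {τ : ℝ → ℝ → ℝ → E} {K : ℝ≥0} {a b : ℝ} (hD : IsClosed D) (ha : a ∈ D) (hb : b ∈ D)
    (hγ : ContinuousOn γ D)
    (hτ : ∀ p q, IsGap D p q → ContinuousOn (τ p q) (Icc p q) ∧ τ p q p = γ p ∧ τ p q q = γ q ∧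
      eVariationOn (τ p q) (Icc p q) ≤ K * edist (γ p) (γ q)) :
    ContinuousOn (gapFill D γ τ) (Icc a b) := by
  refine continuousOn_of_forall_isGap (K := K) hD (hγ.congr fun t ht => gapFill_of_mem ht)
    (fun p q hpq => ?_) ha hb
  obtain ⟨hcont, hp, hq, hvar⟩ := hτ p q hpq
  have heq := hpq.eqOn_gapFill hp hq
  refine ⟨hcont.congr heq, ?_⟩
  rw [eVariationOn.eq_of_eqOn heq, gapFill_of_mem hpq.left_mem, gapFill_of_mem hpq.right_mem]
  exact hvar

def IsPathWithLengthLE {E : Type*} [PseudoEMetricSpace E] (S : Set E) (a b : ℝ) (x y : E)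
    (C : ℝ≥0∞) (σ : ℝ → E) : Prop :=
  ContinuousOn σ (Icc a b) ∧ σ '' Icc a b ⊆ S ∧ σ a = x ∧ σ b = y ∧ eVariationOn σ (Icc a b) ≤ C

namespace IsPathWithLengthLE

variable {E : Type*} [PseudoEMetricSpace E] {S T : Set E} {x y : E} {C C' : ℝ≥0∞} {σ : ℝ → E}

theorem mono (h : IsPathWithLengthLE S 0 1 x y C σ) (hST : S ⊆ T) (hC : C ≤ C') :
    IsPathWithLengthLE T 0 1 x y C' σ :=
  ⟨h.1, h.2.1.trans hST, h.2.2.1, h.2.2.2.1, h.2.2.2.2.trans hC⟩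

theorem comp_affine (h : IsPathWithLengthLE S 0 1 x y C σ) {p q : ℝ} (hpq : p < q) :
    IsPathWithLengthLE S p q x y C (σ ∘ fun t => (t - p) / (q - p)) := by
  have hqp : 0 < q - p := sub_pos.2 hpq
  have hmaps : MapsTo (fun t => (t - p) / (q - p)) (Icc p q) (Icc 0 1) := fun t ht =>
    ⟨div_nonneg (by linarith [ht.1]) hqp.le, (div_le_one hqp).2 (by linarith [ht.2])⟩
  have hmono : MonotoneOn (fun t => (t - p) / (q - p)) (Icc p q) := fun a _ b _ hab =>
    div_le_div_of_nonneg_right (by linarith) hqp.le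
  refine ⟨h.1.comp (by fun_prop) hmaps, ?_, by simpa using h.2.2.1, ?_,
    (eVariationOn.comp_le_of_monotoneOn σ _ hmono hmaps).trans h.2.2.2.2⟩
  · rw [image_comp]
    exact (image_mono hmaps.image_subset).trans h.2.1
  · simpa [div_self hqp.ne'] using h.2.2.2.1

end IsPathWithLengthLE

section Components

variable {X : Type*} [TopologicalSpace X] {U : Set X}

theorem IsOpen.frontier_connectedComponentIn_subset [LocallyConnectedSpace X] (hU : IsOpen U)
    (v : X) : frontier (connectedComponentIn U v) ⊆ frontier U := by
  intro x hx
  rw [hU.frontier_eq]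
  refine ⟨closure_mono (connectedComponentIn_subset U v) hx.1, fun hxU => hx.2 ?_⟩
  -- the component of `x` is an open neighbourhood of `x`, so it meets, hence equals, that of `v`
  obtain ⟨y, hyx, hyv⟩ :=
    mem_closure_iff.1 hx.1 _ hU.connectedComponentIn (mem_connectedComponentIn hxU)
  rw [hU.connectedComponentIn.interior_eq, connectedComponentIn_eq hyv,
    ← connectedComponentIn_eq hyx]
  exact mem_connectedComponentIn hxU

theorem mem_frontier_connectedComponentIn {γ : ℝ → X} {p q m x : ℝ}
    (hγ : ContinuousOn γ (Icc p q)) (hγU : MapsTo γ (Ioo p q) U) (hm : m ∈ Ioo p q)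
    (hx : x ∈ Icc p q) (hxU : γ x ∉ U) : γ x ∈ frontier (connectedComponentIn U (γ m)) := by
  have himg : γ '' Ioo p q ⊆ connectedComponentIn U (γ m) :=
    (isPreconnected_Ioo.image γ (hγ.mono Ioo_subset_Icc_self)).subset_connectedComponentIn
      ⟨m, hm, rfl⟩ hγU.image_subset
  have hcl : γ x ∈ closure (γ '' Ioo p q) :=
    ((hγ x hx).mono Ioo_subset_Icc_self).mem_closure_image
      (by rwa [closure_Ioo (hm.1.trans hm.2).ne])
  exact ⟨closure_mono himg hcl,
    fun hint => hxU (connectedComponentIn_subset _ _ (interior_subset hint))⟩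

end Components

theorem exists_path_frontier_of_excursion {E : Type*} [PseudoMetricSpace E]
    [LocallyConnectedSpace E] {U : Set E} (hU : IsOpen U) {k : ℝ} (hk : 0 ≤ k)
    (hcomp : ∀ v ∈ U, ∀ x ∈ frontier (connectedComponentIn U v),
      ∀ y ∈ frontier (connectedComponentIn U v), ∃ σ : ℝ → E,
        IsPathWithLengthLE (frontier (connectedComponentIn U v)) 0 1 x y
          (ENNReal.ofReal (k * dist x y)) σ)
    {γ : ℝ → E} {p q : ℝ} (hγ : ContinuousOn γ (Icc p q)) (hpq : p < q)
    (hγU : MapsTo γ (Ioo p q) U) (hp : γ p ∉ U) (hq : γ q ∉ U) :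
    ∃ τ : ℝ → E, IsPathWithLengthLE (frontier U) p q (γ p) (γ q)
      (ENNReal.ofReal k * edist (γ p) (γ q)) τ := by
  have hm : (p + q) / 2 ∈ Ioo p q := ⟨by linarith, by linarith⟩
  obtain ⟨σ, hσ⟩ := hcomp _ (hγU hm) _
    (mem_frontier_connectedComponentIn hγ hγU hm (left_mem_Icc.2 hpq.le) hp) _
    (mem_frontier_connectedComponentIn hγ hγU hm (right_mem_Icc.2 hpq.le) hq)
  refine ⟨_, (hσ.mono (hU.frontier_connectedComponentIn_subset _) ?_).comp_affine hpq⟩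
  rw [ENNReal.ofReal_mul hk, edist_dist]

theorem stmt3_general {n : ℕ} (U : Set (EuclideanSpace ℝ (Fin n))) (hU : IsOpen U)
    (k : ℝ) (hk : 1 ≤ k)
    (hcomp : ∀ v ∈ U, ∀ x ∈ frontier (connectedComponentIn U v),
      ∀ y ∈ frontier (connectedComponentIn U v),
      ∃ σ : ℝ → EuclideanSpace ℝ (Fin n), ContinuousOn σ (Set.Icc 0 1) ∧
        σ '' Set.Icc 0 1 ⊆ frontier (connectedComponentIn U v) ∧
        σ 0 = x ∧ σ 1 = y ∧
        eVariationOn σ (Set.Icc 0 1) ≤ ENNReal.ofReal (k * dist x y))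
    (γ : ℝ → EuclideanSpace ℝ (Fin n)) (hγc : ContinuousOn γ (Set.Icc 0 1))
    (hγU : γ '' Set.Icc 0 1 ⊆ closure U)
    (h0 : γ 0 ∈ frontier U) (h1 : γ 1 ∈ frontier U)
    (L : ℝ≥0∞) (hL : eVariationOn γ (Set.Icc 0 1) = L) :
    ∃ σ : ℝ → EuclideanSpace ℝ (Fin n), ContinuousOn σ (Set.Icc 0 1) ∧
      σ '' Set.Icc 0 1 ⊆ frontier U ∧ σ 0 = γ 0 ∧ σ 1 = γ 1 ∧
      eVariationOn σ (Set.Icc 0 1) ≤ ENNReal.ofReal k * L := by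
  set D := Icc (0 : ℝ) 1 ∩ γ ⁻¹' Uᶜ
  have hD : IsClosed D := hγc.preimage_isClosed_of_isClosed isClosed_Icc hU.isClosed_compl
  have h0D : (0 : ℝ) ∈ D := ⟨left_mem_Icc.2 zero_le_one, (hU.frontier_eq ▸ h0).2⟩
  have h1D : (1 : ℝ) ∈ D := ⟨right_mem_Icc.2 zero_le_one, (hU.frontier_eq ▸ h1).2⟩
  have hgap : ∀ p q, IsGap D p q → ∃ τ, IsPathWithLengthLE (frontier U) p q (γ p) (γ q)
      (ENNReal.ofReal k * edist (γ p) (γ q)) τ := by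
    intro p q hpq
    have hsub : Icc p q ⊆ Icc 0 1 := Icc_subset_Icc hpq.left_mem.1.1 hpq.right_mem.1.2
    exact exists_path_frontier_of_excursion hU (by linarith) hcomp (hγc.mono hsub) hpq.lt
      (fun t ht => not_not.1 fun htU => hpq.Ioo_subset ht ⟨hsub (Ioo_subset_Icc_self ht), htU⟩)
      hpq.left_mem.2 hpq.right_mem.2
  choose! τ hτ using hgap
  refine ⟨gapFill D γ τ, ?_, ?_, gapFill_of_mem h0D, gapFill_of_mem h1D, ?_⟩
  · exact continuousOn_gapFill (K := k.toNNReal) hD h0D h1D (hγc.mono inter_subset_left)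
      fun p q hpq => ⟨(hτ p q hpq).1, (hτ p q hpq).2.2⟩
  · refine (mapsTo_gapFill hD h0D h1D (fun t ht => ?_) fun p q hpq t ht =>
      (hτ p q hpq).2.1 (mem_image_of_mem _ (Ioo_subset_Icc_self ht))).image_subset
    rw [hU.frontier_eq]
    exact ⟨hγU (mem_image_of_mem γ ht.1), ht.2⟩
  · rw [← hL]
    exact eVariationOn_gapFill_le (ENNReal.one_le_ofReal.2 hk)
      (fun p q hpq => (hτ p q hpq).2.2) h0D h1D zero_le_one

theorem stmt3 {n : ℕ} (U : Set (EuclideanSpace ℝ (Fin n))) (hU : IsOpen U)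
    (k : ℝ) (hk : 1 ≤ k)
    (hcomp : ∀ v ∈ U, ∀ x ∈ frontier (connectedComponentIn U v),
      ∀ y ∈ frontier (connectedComponentIn U v),
      ∃ σ : ℝ → EuclideanSpace ℝ (Fin n), ContinuousOn σ (Set.Icc 0 1) ∧
        σ '' Set.Icc 0 1 ⊆ frontier (connectedComponentIn U v) ∧
        σ 0 = x ∧ σ 1 = y ∧
        eVariationOn σ (Set.Icc 0 1) ≤ ENNReal.ofReal (k * dist x y))
    (γ : ℝ → EuclideanSpace ℝ (Fin n)) (hγc : ContinuousOn γ (Set.Icc 0 1))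
    (hγU : γ '' Set.Icc 0 1 ⊆ closure U)
    (h0 : γ 0 ∈ frontier U) (h1 : γ 1 ∈ frontier U)
    (L : ℝ≥0∞) (hL : eVariationOn γ (Set.Icc 0 1) = L) (hLfin : L ≠ ⊤) :
    ∃ σ : ℝ → EuclideanSpace ℝ (Fin n), ContinuousOn σ (Set.Icc 0 1) ∧
      σ '' Set.Icc 0 1 ⊆ frontier U ∧ σ 0 = γ 0 ∧ σ 1 = γ 1 ∧
      eVariationOn σ (Set.Icc 0 1) ≤ ENNReal.ofReal k * L :=
  stmt3_general U hU k hk hcomp γ hγc hγU h0 h1 L hL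
end

section
/- Let E be a compact subset of ℝⁿ and let w, z lie in the same connected component of ℝⁿ \ E. Then the maps π_w, π_z : E → Sⁿ⁻¹, where π_v(x) = (x − v)/|x − v|, are homotopic as continuous maps from E to the unit sphere Sⁿ⁻¹. -/
theorem stmt8 {n : ℕ} (E : Set (EuclideanSpace ℝ (Fin n))) (hE : IsCompact E)
    (w z : EuclideanSpace ℝ (Fin n)) (hw : w ∉ E)
    (hz : z ∈ connectedComponentIn Eᶜ w) :
    ∃ H : EuclideanSpace ℝ (Fin n) × ℝ → EuclideanSpace ℝ (Fin n),
      ContinuousOn H (E ×ˢ Set.Icc 0 1) ∧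
      (∀ x ∈ E, ∀ t ∈ Set.Icc (0:ℝ) 1, ‖H (x, t)‖ = 1) ∧
      (∀ x ∈ E, H (x, 0) = ‖x - w‖⁻¹ • (x - w)) ∧
      (∀ x ∈ E, H (x, 1) = ‖x - z‖⁻¹ • (x - z)) := by
  have hEc : IsOpen Eᶜ := hE.isClosed.isOpen_compl
  have hwE : w ∈ Eᶜ := hw
  have hopen : IsOpen (connectedComponentIn Eᶜ w) := hEc.connectedComponentIn
  have hconn : IsConnected (connectedComponentIn Eᶜ w) :=
    isConnected_connectedComponentIn_iff.mpr hwE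
  have hpc : IsPathConnected (connectedComponentIn Eᶜ w) :=
    hopen.isConnected_iff_isPathConnected.mp hconn
  have hj : JoinedIn (connectedComponentIn Eᶜ w) w z :=
    hpc.joinedIn w (mem_connectedComponentIn hwE) z hz
  set γ : Path w z := hj.somePath with hγdef
  have hγ : ∀ t, γ t ∈ connectedComponentIn Eᶜ w := hj.somePath_mem
  -- γ : Path w z, hγ : ∀ t, γ t ∈ connectedComponentIn Eᶜ w
  set g : ℝ → EuclideanSpace ℝ (Fin n) := fun t => γ (Set.projIcc 0 1 zero_le_one t) with hg
  have hgc : Continuous g := γ.continuous.comp continuous_projIcc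
  have hgne : ∀ t, g t ∉ E := fun t =>
    (connectedComponentIn_subset Eᶜ w) (hγ _)
  refine ⟨fun p => ‖p.1 - g p.2‖⁻¹ • (p.1 - g p.2), ?_, ?_, ?_, ?_⟩
  · have hsub : ContinuousOn (fun p : EuclideanSpace ℝ (Fin n) × ℝ => p.1 - g p.2)
        (E ×ˢ Set.Icc 0 1) :=
      (continuous_fst.sub (hgc.comp continuous_snd)).continuousOn
    have hne : ∀ p ∈ (E ×ˢ Set.Icc (0:ℝ) 1), p.1 - g p.2 ≠ 0 := by
      rintro ⟨x, t⟩ ⟨hx, _⟩ h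
      exact hgne t (sub_eq_zero.mp h ▸ hx)
    exact ((hsub.norm.inv₀ (fun p hp => norm_ne_zero_iff.mpr (hne p hp))).smul hsub)
  · rintro x hx t ht
    have h0 : x - g t ≠ 0 := fun h => hgne t (sub_eq_zero.mp h ▸ hx)
    simp [norm_smul, norm_inv, inv_mul_cancel₀ (norm_ne_zero_iff.mpr h0)]
  · intro x hx
    simp [hg, Set.projIcc, γ.source]
  · intro x hx
    have : Set.projIcc (0:ℝ) 1 zero_le_one 1 = 1 := by simp [Set.projIcc]
    simp [hg, this, γ.target]
end

section
/- Let E be a compact subset of ℝⁿ and w a point of the unbounded connected component of ℝⁿ \ E. Then the map π_w : E → Sⁿ⁻¹, π_w(x) = (x − w)/|x − w|, is homotopic to a constant map. -/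
/-!
Since `w` lies in the unbounded component of the open set `Eᶜ`, it can be joined by a path
in `Eᶜ` to a point `w'` farther from the origin than every point of `E`. Slide `w` along
that path and then shrink `E` radially to the origin: the moving point never meets the
moving copy of `E`, so normalizing `x - (base point)` gives a homotopy into the unit sphere
ending at the constant `-w' / ‖w'‖`.
-/

open Set

variable {V : Type*} [NormedAddCommGroup V] [NormedSpace ℝ V]

theorem exists_joinedIn_compl_lt_norm {E : Set V} (hE : IsClosed E) {w : V} (hw : w ∉ E)
    (hunbdd : ¬ Bornology.IsBounded (connectedComponentIn Eᶜ w)) (R : ℝ) :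
    ∃ w', R < ‖w'‖ ∧ JoinedIn Eᶜ w w' := by
  obtain ⟨w', hw'C, hRw'⟩ : ∃ w' ∈ connectedComponentIn Eᶜ w, R < ‖w'‖ := by
    simp only [isBounded_iff_forall_norm_le, not_exists, not_forall, not_le, exists_prop] at hunbdd
    exact hunbdd R
  have hC : IsPathConnected (connectedComponentIn Eᶜ w) :=
    hE.isOpen_compl.connectedComponentIn.isConnected_iff_isPathConnected.mp
      (isConnected_connectedComponentIn_iff.mpr hw)
  exact ⟨w', hRw', (hC.joinedIn w (mem_connectedComponentIn hw) w' hw'C).mono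
    (connectedComponentIn_subset _ _)⟩

namespace Path

variable {w w' : V} (γ : Path w w')

/-- `x - γ(2t)` for `t ≤ 1/2`, then `(2 - 2t) • x - w'`. -/
noncomputable def slideShrink (q : V × ℝ) : V :=
  min 1 (2 - 2 * q.2) • q.1 - γ.extend (2 * q.2)

theorem continuous_slideShrink : Continuous γ.slideShrink :=
  ((continuous_const.min (by fun_prop)).smul continuous_fst).sub
    (γ.continuous_extend.comp (by fun_prop))

theorem slideShrink_zero (x : V) : γ.slideShrink (x, 0) = x - w := by
  simp [slideShrink]

theorem slideShrink_one (x : V) : γ.slideShrink (x, 1) = -w' := by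
  norm_num [slideShrink, γ.extend_of_one_le (show (1 : ℝ) ≤ 2 by norm_num)]

theorem slideShrink_ne_zero {E : Set V} (hγ : ∀ s, γ s ∉ E) (hE : ∀ x ∈ E, ‖x‖ < ‖w'‖)
    {x : V} (hx : x ∈ E) {t : ℝ} (ht : t ∈ Icc (0 : ℝ) 1) : γ.slideShrink (x, t) ≠ 0 := by
  change min 1 (2 - 2 * t) • x - γ.extend (2 * t) ≠ 0
  rw [sub_ne_zero]
  rcases le_or_gt t (1 / 2) with h | h
  · rw [min_eq_left (by linarith), one_smul, γ.extend_apply ⟨by linarith [ht.1], by linarith⟩]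
    rintro rfl
    exact hγ _ hx
  · rw [min_eq_right (by linarith), γ.extend_of_one_le (by linarith)]
    intro hxw'
    have : ‖(2 - 2 * t) • x‖ ≤ ‖x‖ := by
      rw [norm_smul, Real.norm_eq_abs, abs_of_nonneg (by linarith [ht.2])]
      exact mul_le_of_le_one_left (norm_nonneg x) (by linarith)
    exact (hxw' ▸ this).not_gt (hE x hx)

end Path

theorem stmt9 {n : ℕ} (E : Set (EuclideanSpace ℝ (Fin n))) (hE : IsCompact E)
    (w : EuclideanSpace ℝ (Fin n)) (hw : w ∉ E)
    (hunbdd : ¬ Bornology.IsBounded (connectedComponentIn Eᶜ w)) :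
    ∃ p : EuclideanSpace ℝ (Fin n), ‖p‖ = 1 ∧
    ∃ H : EuclideanSpace ℝ (Fin n) × ℝ → EuclideanSpace ℝ (Fin n),
      ContinuousOn H (E ×ˢ Set.Icc 0 1) ∧
      (∀ x ∈ E, ∀ t ∈ Set.Icc (0:ℝ) 1, ‖H (x, t)‖ = 1) ∧
      (∀ x ∈ E, H (x, 0) = ‖x - w‖⁻¹ • (x - w)) ∧
      (∀ x ∈ E, H (x, 1) = p) := by
  obtain ⟨R, hR0, hRE⟩ := hE.isBounded.exists_pos_norm_le
  obtain ⟨w', hRw', hjoin⟩ := exists_joinedIn_compl_lt_norm hE.isClosed hw hunbdd R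
  set φ := hjoin.somePath.slideShrink
  have hφ : ∀ q ∈ E ×ˢ Icc (0 : ℝ) 1, φ q ≠ 0 := fun ⟨_, _⟩ ⟨hx, ht⟩ =>
    hjoin.somePath.slideShrink_ne_zero hjoin.somePath_mem
      (fun x hx => (hRE x hx).trans_lt hRw') hx ht
  have hw'0 : w' ≠ 0 := norm_pos_iff.mp (hR0.trans hRw')
  refine ⟨-(‖w'‖⁻¹ • w'), by rw [norm_neg]; exact norm_smul_inv_norm hw'0,
    fun q => ‖φ q‖⁻¹ • φ q, ?_, fun x hx t ht => norm_smul_inv_norm (hφ (x, t) ⟨hx, ht⟩),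
    fun x _ => by simp only [φ, Path.slideShrink_zero],
    fun x _ => by simp only [φ, Path.slideShrink_one, norm_neg, smul_neg]⟩
  have hφc := hjoin.somePath.continuous_slideShrink
  exact (hφc.norm.continuousOn.inv₀ fun q hq => norm_ne_zero_iff.mpr (hφ q hq)).smul
    hφc.continuousOn
end
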